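/- Let A, B, C be admissible linear chains with e(B) = 1 − e(Aᵀ) and e(C) = 1 − e(Bᵀ). Then C = A. (That is, the adjoint operation on admissible linear chains is an involution: A** = A.) -/

import Mathlib

/-- The tridiagonal matrix associated to a linear chain `A = [a₁,…,a_r]`:
diagonal entries `aᵢ`, entries `-1` immediately above/below the diagonal, `0` elsewhere. -/
def chainMatrix (A : List ℤ) : Matrix (Fin A.length) (Fin A.length) ℤ :=
  fun i j =>
    if i = j then A.get i
    else if (i : ℕ) + 1 = (j : ℕ) ∨ (j : ℕ) + 1 = (i : ℕ) then -1 else 0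

/-- The discriminant `d(A)` of a linear chain: the determinant of `chainMatrix A`
(the `0 × 0` determinant being `1` for the empty list). -/
def disc (A : List ℤ) : ℤ := (chainMatrix A).det

/-- A linear chain is admissible if it is nonempty and all of its entries are `≥ 2`. -/
def Admissible (A : List ℤ) : Prop := A ≠ [] ∧ ∀ a ∈ A, 2 ≤ a

/-- The inductance `e(A) = d(A̅)/d(A)` of a linear chain, as a rational number. -/
def inductance (A : List ℤ) : ℚ := (disc A.tail : ℚ) / (disc A : ℚ)

/-!
Write `d = d(A)`, `p = d(A̅)`, `q = d(A̲)`. Cassini's identity for continuants,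
`d(A̅) d(A̲) - d(A) d(A̲̅) = 1`, makes `p` and `q` inverse to each other modulo `d`, and
admissibility puts both in `(0, d)`. So `e(A) = p / d` and `e(Aᵀ) = q / d` are in lowest terms,
and an admissible chain is determined by `(d(A), d(A̅))`, since `d(A) = a₁ d(A̅) - d(A̅̅)` with
`0 < d(A̅̅) < d(A̅)` forces `a₁`. If `e(B) = 1 - e(Aᵀ) = (d - q) / d`, then `d(B) = d` and
`d(B̅) = d - q`; now `d(B̲)` is the inverse of `d - q` modulo `d` lying in `(0, d)`, which is
`d - p` because `(d - q)(d - p) ≡ pq ≡ 1`. Hence `e(Bᵀ) = 1 - e(A)`, so `e(C) = e(A)` and `C = A`.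
-/

theorem Int.eq_of_mul_sub_eq_mul_sub {a c p r s : ℤ} (h : a * p - r = c * p - s)
    (hr : r ∈ Set.Ioo 0 p) (hs : s ∈ Set.Ioo 0 p) : a = c := by
  obtain ⟨hr0, hrp⟩ := hr
  obtain ⟨hs0, hsp⟩ := hs
  rcases lt_trichotomy a c with hac | hac | hac
  · nlinarith [mul_le_mul_of_nonneg_right (show 1 ≤ c - a by omega) (hr0.trans hrp).le]
  · exact hac
  · nlinarith [mul_le_mul_of_nonneg_right (show 1 ≤ a - c by omega) (hr0.trans hrp).le]

theorem isCoprime_of_mul_modEq_one {a b n : ℤ} (h : a * b ≡ 1 [ZMOD n]) : IsCoprime a n := by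
  obtain ⟨t, ht⟩ := Int.modEq_iff_dvd.mp h
  exact ⟨b, t, by linarith⟩

theorem Matrix.det_eq_of_row_zero_col_zero {R : Type*} [CommRing R] {n : ℕ}
    (M : Matrix (Fin (n + 2)) (Fin (n + 2)) R) (hrow : ∀ j : Fin n, M 0 j.succ.succ = 0)
    (hcol : ∀ i : Fin n, M i.succ.succ 0 = 0) :
    M.det = M 0 0 * (M.submatrix Fin.succ Fin.succ).det -
      M 0 1 * M 1 0 * (M.submatrix (Fin.succ ∘ Fin.succ) (Fin.succ ∘ Fin.succ)).det := by
  have minor : (M.submatrix Fin.succ (Fin.succAbove 1)).det =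
      M 1 0 * (M.submatrix (Fin.succ ∘ Fin.succ) (Fin.succ ∘ Fin.succ)).det := by
    rw [det_succ_column_zero, Fin.sum_univ_succ, Finset.sum_eq_zero fun i _ => by simp [hcol]]
    simp [Function.comp_def]
  rw [det_succ_row_zero, Fin.sum_univ_succ, Fin.sum_univ_succ,
    Finset.sum_eq_zero fun j _ => by simp [hrow]]
  simp [minor]
  ring

theorem chainMatrix_cons_succ_succ (a : ℤ) (l : List ℤ) (i j : Fin l.length) :
    chainMatrix (a :: l) i.succ j.succ = chainMatrix l i j := by
  simp [chainMatrix]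

theorem chainMatrix_cons_submatrix_succ (a : ℤ) (l : List ℤ) :
    (chainMatrix (a :: l)).submatrix Fin.succ Fin.succ = chainMatrix l := by
  ext i j
  exact chainMatrix_cons_succ_succ a l i j

theorem disc_nil : disc [] = 1 := by
  simp [disc]

theorem disc_singleton (a : ℤ) : disc [a] = a := by
  simp [disc, chainMatrix]

theorem disc_cons_cons (a b : ℤ) (l : List ℤ) :
    disc (a :: b :: l) = a * disc (b :: l) - disc l := by
  have h := Matrix.det_eq_of_row_zero_col_zero (n := l.length) (chainMatrix (a :: b :: l))
    (fun j => by simp [chainMatrix, Fin.ext_iff]) (fun i => by simp [chainMatrix, Fin.ext_iff])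
  rw [← Matrix.submatrix_submatrix, chainMatrix_cons_submatrix_succ,
    chainMatrix_cons_submatrix_succ] at h
  simpa [disc, chainMatrix] using h

theorem chainMatrix_reverse (A : List ℤ) :
    chainMatrix A.reverse = (chainMatrix A).submatrix
      ((finCongr A.length_reverse).trans Fin.revPerm)
      ((finCongr A.length_reverse).trans Fin.revPerm) := by
  ext i j
  have hi : (i : ℕ) < A.length := A.length_reverse ▸ i.isLt
  have hj : (j : ℕ) < A.length := A.length_reverse ▸ j.isLt
  simp only [chainMatrix, Matrix.submatrix_apply, Equiv.trans_apply, finCongr_apply,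
    Fin.revPerm_apply, List.get_eq_getElem, List.getElem_reverse, Fin.ext_iff, Fin.val_rev,
    Fin.val_cast]
  split_ifs <;> first | omega | (congr 1; omega)

theorem disc_reverse (A : List ℤ) : disc A.reverse = disc A := by
  rw [disc, chainMatrix_reverse, Matrix.det_submatrix_equiv_self, disc]

-- Cassini's identity for `A = a :: l ++ [b]`: `d(A̅) d(A̲) - d(A) d(A̲̅) = 1`.
theorem disc_append_singleton_mul_disc_cons_sub (a b : ℤ) (l : List ℤ) :
    disc (l ++ [b]) * disc (a :: l) - disc (a :: l ++ [b]) * disc l = 1 := by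
  induction l generalizing a with
  | nil =>
    simp only [List.nil_append, List.cons_append, disc_cons_cons, disc_singleton, disc_nil]
    ring
  | cons c m ih =>
    simp only [List.cons_append, disc_cons_cons] at ih ⊢
    linear_combination ih c

theorem disc_tail_mul_disc_dropLast_modEq (A : List ℤ) :
    disc A.tail * disc A.dropLast ≡ 1 [ZMOD disc A] := by
  match A with
  | [] | [_] => simp [disc_nil, Int.ModEq.refl]
  | a :: b :: l =>
    obtain ⟨m, c, hm⟩ := (List.eq_nil_or_concat' (b :: l)).resolve_left (List.cons_ne_nil b l)
    rw [List.tail_cons, hm, ← List.cons_append, List.dropLast_concat, Int.modEq_iff_dvd]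
    exact ⟨-disc m, by linear_combination -disc_append_singleton_mul_disc_cons_sub a c m⟩

theorem isCoprime_disc_tail_disc (A : List ℤ) : IsCoprime (disc A.tail) (disc A) :=
  isCoprime_of_mul_modEq_one (disc_tail_mul_disc_dropLast_modEq A)

namespace Admissible

variable {A C : List ℤ}

theorem of_cons {a b : ℤ} {l : List ℤ} (h : Admissible (a :: b :: l)) : Admissible (b :: l) :=
  ⟨List.cons_ne_nil b l, fun x hx => h.2 x (List.mem_cons_of_mem a hx)⟩

theorem reverse (h : Admissible A) : Admissible A.reverse :=
  ⟨List.reverse_ne_nil_iff.mpr h.1, fun x hx => h.2 x (List.mem_reverse.mp hx)⟩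

theorem disc_tail_mem_Ioo (h : Admissible A) : disc A.tail ∈ Set.Ioo 0 (disc A) := by
  obtain ⟨a, l, rfl⟩ := List.exists_cons_of_ne_nil h.1
  induction l generalizing a with
  | nil => simpa [disc_nil, disc_singleton] using one_lt_two.trans_le (h.2 a List.mem_cons_self)
  | cons b m ih =>
    obtain ⟨hm, hbm⟩ := ih b h.of_cons
    have ha : 2 ≤ a := h.2 a List.mem_cons_self
    simp only [List.tail_cons, disc_cons_cons, Set.mem_Ioo] at hm hbm ⊢
    constructor <;> nlinarith

theorem disc_pos (h : Admissible A) : 0 < disc A :=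
  h.disc_tail_mem_Ioo.1.trans h.disc_tail_mem_Ioo.2

theorem disc_dropLast_mem_Ioo (h : Admissible A) : disc A.dropLast ∈ Set.Ioo 0 (disc A) := by
  simpa [List.tail_reverse, disc_reverse] using h.reverse.disc_tail_mem_Ioo

theorem disc_eq_of_inductance_eq_div (h : Admissible A) {x y : ℤ} (hy : 0 < y)
    (hxy : IsCoprime x y) (he : inductance A = x / y) : disc A.tail = x ∧ disc A = y :=
  Rat.div_int_inj h.disc_pos hy (Int.isCoprime_iff_gcd_eq_one.mp (isCoprime_disc_tail_disc A))
    (Int.isCoprime_iff_gcd_eq_one.mp hxy) he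

theorem eq_of_disc_eq (hA : Admissible A) (hC : Admissible C) (hd : disc A = disc C)
    (ht : disc A.tail = disc C.tail) : A = C := by
  induction A generalizing C with
  | nil => exact absurd rfl hA.1
  | cons a l ih =>
    obtain ⟨c, n, rfl⟩ := List.exists_cons_of_ne_nil hC.1
    match l, n with
    | [], [] => simpa [disc_singleton] using hd
    | [], e :: n =>
      have := hC.of_cons.disc_tail_mem_Ioo
      simp only [List.tail_cons, disc_nil, Set.mem_Ioo] at ht this
      omega
    | b :: m, [] =>
      have := hA.of_cons.disc_tail_mem_Ioo
      simp only [List.tail_cons, disc_nil, Set.mem_Ioo] at ht this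
      omega
    | b :: m, e :: n =>
      have hm := hA.of_cons.disc_tail_mem_Ioo
      have hn := hC.of_cons.disc_tail_mem_Ioo
      simp only [List.tail_cons] at hm hn ht
      rw [disc_cons_cons, disc_cons_cons, ← ht] at hd
      rw [← ht] at hn
      obtain rfl := Int.eq_of_mul_sub_eq_mul_sub hd hm hn
      rw [ih hA.of_cons hC.of_cons ht (sub_right_injective hd)]

theorem eq_of_inductance_eq (hA : Admissible A) (hC : Admissible C)
    (he : inductance A = inductance C) : A = C := by
  obtain ⟨ht, hd⟩ := hA.disc_eq_of_inductance_eq_div hC.disc_pos (isCoprime_disc_tail_disc C) he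
  exact hA.eq_of_disc_eq hC hd ht

theorem disc_dropLast_eq_of_modEq (h : Admissible A) {x : ℤ} (hx : x ∈ Set.Ioo 0 (disc A))
    (hinv : disc A.tail * x ≡ 1 [ZMOD disc A]) : disc A.dropLast = x := by
  have hmod : disc A.dropLast ≡ x [ZMOD disc A] :=
    calc disc A.dropLast = disc A.dropLast * 1 := (mul_one _).symm
      _ ≡ disc A.dropLast * (disc A.tail * x) [ZMOD disc A] := hinv.symm.mul_left _
      _ = disc A.tail * disc A.dropLast * x := by ring
      _ ≡ 1 * x [ZMOD disc A] := (disc_tail_mul_disc_dropLast_modEq A).mul_right _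
      _ = x := one_mul x
  have hq := h.disc_dropLast_mem_Ioo
  rwa [Int.ModEq, Int.emod_eq_of_lt hq.1.le hq.2, Int.emod_eq_of_lt hx.1.le hx.2] at hmod

end Admissible

theorem inductance_reverse (A : List ℤ) :
    inductance A.reverse = (disc A.dropLast : ℚ) / disc A := by
  rw [inductance, List.tail_reverse, disc_reverse, disc_reverse]

theorem inductance_reverse_of_adjoint {A B : List ℤ} (hA : Admissible A) (hB : Admissible B)
    (hAB : inductance B = 1 - inductance A.reverse) : inductance B.reverse = 1 - inductance A := by
  have hd : (disc A : ℚ) ≠ 0 := by exact_mod_cast hA.disc_pos.ne'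
  have hp := hA.disc_tail_mem_Ioo
  have hinv : (disc A - disc A.dropLast) * (disc A - disc A.tail) ≡ 1 [ZMOD disc A] :=
    calc (disc A - disc A.dropLast) * (disc A - disc A.tail)
        = disc A.tail * disc A.dropLast + disc A * (disc A - disc A.tail - disc A.dropLast) := by
          ring
      _ ≡ disc A.tail * disc A.dropLast [ZMOD disc A] := Int.modEq_add_fac_self
      _ ≡ 1 [ZMOD disc A] := disc_tail_mul_disc_dropLast_modEq A
  obtain ⟨hBt, hBd⟩ : disc B.tail = disc A - disc A.dropLast ∧ disc B = disc A := by
    refine hB.disc_eq_of_inductance_eq_div hA.disc_pos (isCoprime_of_mul_modEq_one hinv) ?_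
    rw [hAB, inductance_reverse, Int.cast_sub, sub_div, div_self hd]
  have hBq : disc B.dropLast = disc A - disc A.tail :=
    hB.disc_dropLast_eq_of_modEq (by rw [hBd]; constructor <;> linarith [hp.1, hp.2])
      (by rwa [hBt, hBd])
  rw [inductance_reverse, hBq, hBd, inductance, Int.cast_sub, sub_div, div_self hd]

/-- Lemma 2.2 (ii), `A** = A`: if `B = A*` (i.e. `e(B) = 1 − e(Aᵀ)`) and
`C = B*` (i.e. `e(C) = 1 − e(Bᵀ)`), then `C = A`. -/
theorem adjoint_involutive (A B C : List ℤ)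
    (hA : Admissible A) (hB : Admissible B) (hC : Admissible C)
    (hAB : inductance B = 1 - inductance A.reverse)
    (hBC : inductance C = 1 - inductance B.reverse) :
    C = A := by
  refine hC.eq_of_inductance_eq hA ?_
  rw [hBC, inductance_reverse_of_adjoint hA hB hAB]
  ring
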